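/- arXiv:2205.08047 — 3 statements merged into one kernel-verified Lean document; each statement's English description precedes it below -/
import Mathlib

section
/- Suppose A = X D Xᵀ where XᵀX is a diagonal matrix and D is diagonal with diagonal entries in {+1, −1}. Then the matrix absolute value satisfies |A| = X Xᵀ. -/
open Matrix

noncomputable def matAbs {n : Type*} [Fintype n] [DecidableEq n] (A : Matrix n n ℝ) :
    Matrix n n ℝ :=
  (Matrix.posSemidef_conjTranspose_mul_self A).1.eigenvectorUnitary.1 *
    diagonal ((↑) ∘ (√·) ∘ (Matrix.posSemidef_conjTranspose_mul_self A).1.eigenvalues) *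
    (star (Matrix.posSemidef_conjTranspose_mul_self A).1.eigenvectorUnitary : Matrix n n ℝ)

/-!
Since `XᵀX` is diagonal it commutes with `D`, and `D² = 1`, so for `A = X D Xᵀ` we get
`AᵀA = X D (XᵀX) D Xᵀ = X (XᵀX) Xᵀ = (XXᵀ)²`. As `XXᵀ` is positive semidefinite, it is the
unique positive semidefinite square root of `AᵀA`, i.e. `|A|`.
-/

open scoped MatrixOrder

theorem matAbs_eq_cfcAbs {n : Type*} [Fintype n] [DecidableEq n] (A : Matrix n n ℝ) :
    matAbs A = CFC.abs A := by
  have hB := posSemidef_conjTranspose_mul_self A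
  rw [CFC.abs, star_eq_conjTranspose, CFC.sqrt_eq_real_sqrt _ hB.nonneg,
    cfcₙ_eq_cfc (hf0 := Real.sqrt_zero), hB.1.cfc_eq]
  rfl

theorem matAbs_eq_of_conjTranspose_mul_self_eq {n : Type*} [Fintype n] [DecidableEq n]
    {A B : Matrix n n ℝ} (hB : B.PosSemidef) (h : Aᴴ * A = B * B) : matAbs A = B := by
  rw [matAbs_eq_cfcAbs, CFC.abs, star_eq_conjTranspose, h]
  exact CFC.sqrt_mul_self B hB.nonneg

theorem Matrix.IsDiag.diagonal_mul_mul_diagonal_of_mul_self_eq_one {n R : Type*} [Fintype n]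
    [DecidableEq n] [CommSemiring R] {G : Matrix n n R} (hG : G.IsDiag) {f : n → R}
    (hf : ∀ i, f i * f i = 1) :
    diagonal f * G * diagonal f = G := by
  rw [← hG.diagonal_diag, diagonal_mul_diagonal, diagonal_mul_diagonal]
  congr 1
  ext i
  rw [mul_right_comm, hf, one_mul]

theorem Matrix.IsDiag.mul_diagonal_mul_transpose_mul_self {m k R : Type*} [Fintype k]
    [DecidableEq k] [Fintype m] [CommSemiring R] {X : Matrix m k R} (hXX : (Xᵀ * X).IsDiag)
    {f : k → R} (hf : ∀ i, f i * f i = 1) :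
    X * diagonal f * Xᵀ * (X * diagonal f * Xᵀ) = X * Xᵀ * (X * Xᵀ) := by
  calc X * diagonal f * Xᵀ * (X * diagonal f * Xᵀ)
      = X * (diagonal f * (Xᵀ * X) * diagonal f) * Xᵀ := by simp only [Matrix.mul_assoc]
    _ = X * Xᵀ * (X * Xᵀ) := by
      rw [hXX.diagonal_mul_mul_diagonal_of_mul_self_eq_one hf]; simp only [Matrix.mul_assoc]

theorem matAbs_of_sign_diag (n d : ℕ) (X : Matrix (Fin n) (Fin d) ℝ) (f : Fin d → ℝ)
    (hf : ∀ i, f i = 1 ∨ f i = -1) (hXX : (Xᵀ * X).IsDiag) :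
    matAbs (X * Matrix.diagonal f * Xᵀ) = X * Xᵀ := by
  have hsign : ∀ i, f i * f i = 1 := fun i => by rcases hf i with h | h <;> simp [h]
  have hsymm : (X * diagonal f * Xᵀ)ᴴ = X * diagonal f * Xᵀ := by simp [Matrix.mul_assoc]
  refine matAbs_eq_of_conjTranspose_mul_self_eq ?_ ?_
  · simpa [conjTranspose_eq_transpose_of_trivial] using posSemidef_self_mul_conjTranspose X
  · rw [hsymm, hXX.mul_diagonal_mul_transpose_mul_self hsign]
end

section
/- Let A = c·J_n + d·I_n with J_n the all-ones matrix. If every entry of A is strictly positive, then every entry of |A| is strictly positive. -/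
open Matrix

/-- The all-ones matrix `J = 1ₙ 1ₙᵀ`. -/
def allOnes (n : ℕ) : Matrix (Fin n) (Fin n) ℝ := Matrix.of fun _ _ => (1 : ℝ)

/-!
`A = c • J + d • 1` has eigenvalue `n * c + d` on the constant vectors and `d` on their orthogonal
complement, so `|A| = ((|n * c + d| - |d|) / n) • J + |d| • 1`. Positivity of the entries of `A`
makes the row sum `n * c + d` and, when `n ≥ 2`, the entry `c` positive; then
`n * c + d - |d|` equals `n * c` or `(n - 2) * c + 2 * (c + d)`, so every entry of `|A|` is positive.
-/

open scoped MatrixOrder in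
theorem matAbs_eq_of_sq_eq {ι : Type*} [Fintype ι] [DecidableEq ι] {A B : Matrix ι ι ℝ}
    (hB : B.PosSemidef) (h : B ^ 2 = Aᴴ * A) : matAbs A = B := by
  have hA := posSemidef_conjTranspose_mul_self A
  have hsqrt : matAbs A = cfc Real.sqrt (Aᴴ * A) := by
    rw [hA.1.cfc_eq, IsHermitian.cfc, Unitary.conjStarAlgAut_apply]; rfl
  rw [hsqrt, ← cfcₙ_eq_cfc, ← CFC.sqrt_eq_real_sqrt _ hA.nonneg, ← h, CFC.sqrt_sq B hB.nonneg]

section allOnes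

variable {n : ℕ}

theorem smul_allOnes_add_smul_one_apply (a b : ℝ) (i j : Fin n) :
    (a • allOnes n + b • (1 : Matrix (Fin n) (Fin n) ℝ)) i j = a + if i = j then b else 0 := by
  simp [allOnes, one_apply]

theorem sum_smul_allOnes_add_smul_one_apply (a b : ℝ) (i : Fin n) :
    ∑ j, (a • allOnes n + b • (1 : Matrix (Fin n) (Fin n) ℝ)) i j = n * a + b := by
  simp only [smul_allOnes_add_smul_one_apply, Finset.sum_add_distrib, Finset.sum_ite_eq,
    Finset.mem_univ, if_true, Finset.sum_const, Finset.card_univ, Fintype.card_fin, nsmul_eq_mul]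

theorem allOnes_mul_self : allOnes n * allOnes n = (n : ℝ) • allOnes n := by
  ext i j; simp [mul_apply, allOnes]

theorem isHermitian_smul_allOnes_add_smul_one (a b : ℝ) :
    (a • allOnes n + b • (1 : Matrix (Fin n) (Fin n) ℝ)).IsHermitian := by
  ext i j
  simp only [conjTranspose_apply, star_trivial, smul_allOnes_add_smul_one_apply, eq_comm]

theorem smul_allOnes_add_smul_one_sq (a b : ℝ) :
    (a • allOnes n + b • (1 : Matrix (Fin n) (Fin n) ℝ)) ^ 2
      = (n * a ^ 2 + 2 * a * b) • allOnes n + b ^ 2 • (1 : Matrix (Fin n) (Fin n) ℝ) := by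
  simp only [sq, add_mul, mul_add, smul_mul_assoc, mul_smul_comm, allOnes_mul_self,
    one_mul, mul_one, smul_smul]
  module

theorem dotProduct_allOnes_mulVec (x : Fin n → ℝ) :
    x ⬝ᵥ (allOnes n *ᵥ x) = (∑ i, x i) ^ 2 := by
  simp [dotProduct, mulVec, allOnes, sq, ← Finset.sum_mul]

theorem posSemidef_smul_allOnes_add_smul_one {a b : ℝ} (hb : 0 ≤ b) (hab : 0 ≤ n * a + b) :
    (a • allOnes n + b • (1 : Matrix (Fin n) (Fin n) ℝ)).PosSemidef := by
  refine posSemidef_iff_dotProduct_mulVec.2 ⟨isHermitian_smul_allOnes_add_smul_one a b, fun x => ?_⟩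
  have hquad : star x ⬝ᵥ (a • allOnes n + b • 1) *ᵥ x = a * (∑ i, x i) ^ 2 + b * ∑ i, x i ^ 2 := by
    rw [star_trivial, add_mulVec, smul_mulVec, smul_mulVec, one_mulVec, dotProduct_add,
      dotProduct_smul, dotProduct_smul, dotProduct_allOnes_mulVec, smul_eq_mul, smul_eq_mul]
    simp only [dotProduct, sq]
  have hcs : (∑ i, x i) ^ 2 ≤ n * ∑ i, x i ^ 2 := by
    simpa using sq_sum_le_card_mul_sum_sq (s := Finset.univ) (f := x)
  have hsq : 0 ≤ ∑ i, x i ^ 2 := Finset.sum_nonneg fun i _ => sq_nonneg (x i)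
  rw [hquad]
  rcases le_or_gt 0 a with ha | ha
  · positivity
  · nlinarith [mul_le_mul_of_nonpos_left hcs ha.le]

theorem matAbs_smul_allOnes_add_smul_one (c d : ℝ) :
    matAbs (c • allOnes n + d • (1 : Matrix (Fin n) (Fin n) ℝ))
      = ((|n * c + d| - |d|) / n) • allOnes n + |d| • (1 : Matrix (Fin n) (Fin n) ℝ) := by
  obtain rfl | hn := eq_or_ne n 0
  · exact Subsingleton.elim _ _
  replace hn : (n : ℝ) ≠ 0 := Nat.cast_ne_zero.2 hn
  refine matAbs_eq_of_sq_eq (posSemidef_smul_allOnes_add_smul_one (abs_nonneg d) ?_) ?_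
  · rw [mul_div_cancel₀ _ hn]; simp
  · rw [(isHermitian_smul_allOnes_add_smul_one c d).eq, ← sq, smul_allOnes_add_smul_one_sq,
      smul_allOnes_add_smul_one_sq, sq_abs]
    congr 2
    field_simp
    linear_combination sq_abs (n * c + d) - sq_abs d

end allOnes

theorem matAbs_pos_of_ones_plus_id_pos (n : ℕ) (c d : ℝ)
    (A : Matrix (Fin n) (Fin n) ℝ)
    (hA : A = c • allOnes n + d • (1 : Matrix (Fin n) (Fin n) ℝ))
    (hpos : ∀ i j, 0 < A i j) :
    ∀ i j, 0 < matAbs A i j := by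
  intro i j
  have hn : (1 : ℝ) ≤ n := Nat.one_le_cast.2 i.pos
  have hrow : 0 < n * c + d := by
    rw [← sum_smul_allOnes_add_smul_one_apply c d i, ← hA]
    exact Finset.sum_pos (fun j _ => hpos i j) ⟨i, Finset.mem_univ i⟩
  have hdiag := hpos i i
  have hentry := hpos i j
  simp only [hA, smul_allOnes_add_smul_one_apply, if_true] at hdiag hentry
  rw [hA, matAbs_smul_allOnes_add_smul_one, smul_allOnes_add_smul_one_apply, abs_of_pos hrow]
  split_ifs at hentry ⊢ with hij
  · have : 0 < n * c + d - |d| + n * |d| := by nlinarith [abs_nonneg d]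
    calc (0 : ℝ) < (n * c + d - |d| + n * |d|) / n := div_pos this (by linarith)
      _ = (n * c + d - |d|) / n + |d| := by field_simp
  · have h2 : (2 : ℝ) ≤ n := by
      have := Fin.nontrivial_iff_two_le.1 (nontrivial_of_ne i j hij)
      exact_mod_cast this
    have : 0 < n * c + d - |d| := by
      rcases abs_cases d with ⟨hd, -⟩ | ⟨hd, -⟩ <;> rw [hd] <;> nlinarith
    simpa using div_pos this (by linarith)
end

section
/- If A and B are real symmetric matrices, then the matrix absolute value of their Kronecker product satisfies |A ⊗ B| = |A| ⊗ |B|. -/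
/-!
`|M|` is the PSD square root of `Mᴴ * M`, and `(A ⊗ B)ᴴ (A ⊗ B) = AᴴA ⊗ BᴴB`. The Kronecker
product of PSD square roots is PSD and squares to the Kronecker product, so by uniqueness of
PSD square roots it is the square root of `AᴴA ⊗ BᴴB`.
-/

open Matrix Kronecker

open scoped MatrixOrder

lemma matAbs_eq_sqrt {n : Type*} [Fintype n] [DecidableEq n] (A : Matrix n n ℝ) :
    matAbs A = CFC.sqrt (Aᴴ * A) := by
  have hP := Matrix.posSemidef_conjTranspose_mul_self A
  rw [CFC.sqrt_eq_real_sqrt _ hP.nonneg, cfcₙ_eq_cfc, hP.1.cfc_eq, IsHermitian.cfc,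
    Unitary.conjStarAlgAut_apply]
  rfl

lemma Matrix.sqrt_kronecker {m n : Type*} [Fintype m] [DecidableEq m] [Fintype n]
    [DecidableEq n] {X : Matrix m m ℝ} {Y : Matrix n n ℝ} (hX : X.PosSemidef)
    (hY : Y.PosSemidef) : CFC.sqrt (X ⊗ₖ Y) = CFC.sqrt X ⊗ₖ CFC.sqrt Y := by
  have hsX := (CFC.sqrt_nonneg X).posSemidef
  have hsY := (CFC.sqrt_nonneg Y).posSemidef
  refine CFC.sqrt_unique ?_ (hsX.kronecker hsY).nonneg
  rw [← mul_kronecker_mul, CFC.sqrt_mul_sqrt_self X hX.nonneg,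
    CFC.sqrt_mul_sqrt_self Y hY.nonneg]

theorem matAbs_kronecker_general (m n : ℕ) (A : Matrix (Fin m) (Fin m) ℝ)
    (B : Matrix (Fin n) (Fin n) ℝ) :
    matAbs (A ⊗ₖ B) = matAbs A ⊗ₖ matAbs B := by
  rw [matAbs_eq_sqrt, matAbs_eq_sqrt, matAbs_eq_sqrt, conjTranspose_kronecker,
    ← mul_kronecker_mul, sqrt_kronecker (posSemidef_conjTranspose_mul_self A)
      (posSemidef_conjTranspose_mul_self B)]

theorem matAbs_kronecker (m n : ℕ) (A : Matrix (Fin m) (Fin m) ℝ)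
    (B : Matrix (Fin n) (Fin n) ℝ) (hA : A.IsSymm) (hB : B.IsSymm) :
    matAbs (A ⊗ₖ B) = matAbs A ⊗ₖ matAbs B :=
  matAbs_kronecker_general m n A B
end
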